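/- For every even index i ≥ 2 (with n > i+1), the ABR base B_i equals the binary base 2^i, i.e., the ABR and binary place values agree at all even indices i ≥ 2. -/

import Mathlib

/-- The ABR base sequence: B 0 = 2, B 1 = 3, and for i ≥ 2,
    B i = 2^(i+1) - 1 - ∑_{j odd, j < i} B j. -/
def abrB : ℕ → ℕ
  | 0 => 2
  | 1 => 3
  | n + 2 =>
      2 ^ (n + 3) - 1 -
        ∑ j ∈ ((Finset.range (n + 2)).filter fun j => j % 2 = 1).attach, abrB j.1
  decreasing_by
    exact Finset.mem_range.mp (Finset.mem_filter.mp j.2).1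

/-- Extend a length-`n` bit string to all of ℕ by zeros. -/
def extBits (n : ℕ) (d : Fin n → Bool) : ℕ → Bool :=
  fun i => if h : i < n then d ⟨i, h⟩ else false

/-- The sign exponent ε: 1 iff i is even, i ≤ n - 2, d i = 1 and d (i+1) = 1. -/
def abrEps (n : ℕ) (d : ℕ → Bool) (i : ℕ) : ℕ :=
  if i % 2 = 0 ∧ i + 2 ≤ n ∧ d i = true ∧ d (i + 1) = true then 1 else 0

/-- ABR value of an n-bit string: ∑_{i<n} (-1)^{ε(i)} dᵢ Bᵢ. -/
def abrVal (n : ℕ) (d : ℕ → Bool) : ℤ :=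
  ∑ i ∈ Finset.range n, (-1) ^ abrEps n d i * (cond (d i) 1 0 : ℤ) * (abrB i : ℤ)

/-
Writing `S k` for the sum of the odd-indexed bases `B 1 + B 3 + ⋯ + B (2k-1)`, the recursion gives
`B (2k+1) = 2^(2k+2) - 1 - S k`, and by induction `B (2k+1) = 3·4^k` and `S k = 4^k - 1`.
Hence `B (2k) = 2^(2k+1) - 1 - S k = 2·4^k - 4^k = 4^k` for `k ≥ 1`.
-/

open Finset

theorem Finset.sum_filter_range_mod_two_eq_one {M : Type*} [AddCommMonoid M] (f : ℕ → M)
    (n : ℕ) :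
    ∑ j ∈ (range n).filter (fun j => j % 2 = 1), f j = ∑ m ∈ range (n / 2), f (2 * m + 1) := by
  symm
  refine sum_nbij' (fun m => 2 * m + 1) (fun j => j / 2) ?_ ?_ ?_ ?_ fun _ _ => rfl <;>
    intro a <;> simp only [mem_range, mem_filter] <;> omega

theorem abrB_add_two (n : ℕ) :
    abrB (n + 2) = 2 ^ (n + 3) - 1 - ∑ m ∈ range (n / 2 + 1), abrB (2 * m + 1) := by
  rw [abrB, sum_attach _ abrB, sum_filter_range_mod_two_eq_one]
  congr 3
  omega

theorem sum_range_three_mul_four_pow_add_one (k : ℕ) : ∑ m ∈ range k, 3 * 4 ^ m + 1 = 4 ^ k := by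
  simpa [← mul_sum, mul_comm] using geom_sum_mul_add (3 : ℕ) k

theorem abrB_two_mul_add_one (k : ℕ) : abrB (2 * k + 1) = 3 * 4 ^ k := by
  induction k using Nat.strong_induction_on with
  | _ k ih =>
    rcases k with _ | k
    · simp [abrB]
    have hsum : ∑ m ∈ range (k + 1), abrB (2 * m + 1) + 1 = 4 ^ (k + 1) := by
      rw [sum_congr rfl fun m hm => ih m (mem_range.mp hm)]
      exact sum_range_three_mul_four_pow_add_one _
    rw [show 2 * (k + 1) + 1 = 2 * k + 1 + 2 by ring, abrB_add_two,
      show (2 * k + 1) / 2 + 1 = k + 1 by omega]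
    have hpow : 2 ^ (2 * k + 1 + 3) = 4 * 4 ^ (k + 1) := by
      rw [show 2 * k + 1 + 3 = 2 * (k + 2) by ring, pow_mul]
      ring
    omega

theorem sum_range_abrB_two_mul_add_one_add_one (k : ℕ) :
    ∑ m ∈ range k, abrB (2 * m + 1) + 1 = 4 ^ k := by
  simpa only [abrB_two_mul_add_one] using sum_range_three_mul_four_pow_add_one k

theorem abrB_two_mul {k : ℕ} (hk : k ≠ 0) : abrB (2 * k) = 4 ^ k := by
  obtain ⟨k, rfl⟩ := Nat.exists_eq_succ_of_ne_zero hk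
  rw [show 2 * (k + 1) = 2 * k + 2 by ring, abrB_add_two, show 2 * k / 2 + 1 = k + 1 by omega]
  have hsum := sum_range_abrB_two_mul_add_one_add_one (k + 1)
  have hpow : 2 ^ (2 * k + 3) = 2 * 4 ^ (k + 1) := by
    rw [show 2 * k + 3 = 2 * (k + 1) + 1 by ring, pow_succ, pow_mul]
    ring
  omega

theorem abr_even_base_eq_binary_general (i : ℕ) (h2 : 2 ≤ i) (he : i % 2 = 0) : abrB i = 2 ^ i := by
  obtain ⟨k, rfl⟩ : ∃ k, i = 2 * k := ⟨i / 2, by omega⟩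
  rw [abrB_two_mul (by omega), pow_mul]
  norm_num

theorem abr_even_base_eq_binary (n i : ℕ) (h2 : 2 ≤ i) (he : i % 2 = 0)
    (hn : i + 1 < n) : abrB i = 2 ^ i :=
  abr_even_base_eq_binary_general i h2 he
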